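/- arXiv:1410.6924 — 2 statements merged into one kernel-verified Lean document; each statement's English description precedes it below -/
import Mathlib

section
/- Let Δ_{3,7}(X) = (X^{21} − 1)(X − 1)/((X^3 − 1)(X^7 − 1)) and Δ_{4,5}(X) = (X^{20} − 1)(X − 1)/((X^4 − 1)(X^5 − 1)) in ℤ[X]. Then Δ_{3,7} ≠ Δ_{4,5} as polynomials, but for every real number t > 0 the product over the complex roots a of Δ_{3,7} (with multiplicity) of max(|a|, t) equals the product over the complex roots b of Δ_{4,5} (with multiplicity) of max(|b|, t). -/
/-!
Every complex root of `Δ_{p,q}` is a root of `(X^{pq} - 1)(X - 1)`, hence lies on the unit circle, so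
`∏ max(|a|, t) = max(1, t)^{deg Δ_{p,q}}` with `deg Δ_{p,q} = pq + 1 - p - q = (p - 1)(q - 1)`.
Since `(3 - 1)(7 - 1) = 12 = (4 - 1)(5 - 1)`, the two products agree, while `Δ_{3,7}(2) = 2359`
and `Δ_{4,5}(2) = 2255` tell the polynomials apart.
-/

open Polynomial

lemma natDegree_X_pow_sub_one {R : Type*} [Ring R] [Nontrivial R] (n : ℕ) :
    (X ^ n - 1 : R[X]).natDegree = n := by
  simpa using natDegree_X_pow_sub_C (n := n) (r := (1 : R))

lemma X_pow_sub_one_ne_zero {R : Type*} [Ring R] [Nontrivial R] {n : ℕ} (hn : 0 < n) :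
    (X ^ n - 1 : R[X]) ≠ 0 := by
  simpa using X_pow_sub_C_ne_zero hn (1 : R)

lemma norm_eq_one_of_mem_roots_of_dvd {P : ℂ[X]} {n : ℕ} (hn : n ≠ 0)
    (hP : P ∣ (X ^ n - 1) * (X - 1)) {a : ℂ} (ha : a ∈ P.roots) : ‖a‖ = 1 := by
  have hroot : ((X ^ n - 1) * (X - 1) : ℂ[X]).IsRoot a := (isRoot_of_mem_roots ha).dvd hP
  simp only [IsRoot, eval_mul, eval_sub, eval_pow, eval_X, eval_one, mul_eq_zero,
    sub_eq_zero] at hroot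
  rcases hroot with hpow | rfl
  · exact Complex.norm_eq_one_of_pow_eq_one hpow hn
  · exact norm_one

lemma prod_roots_map_max_norm_of_forall_norm_eq_one {P : ℂ[X]} (h : ∀ a ∈ P.roots, ‖a‖ = 1)
    (t : ℝ) : (P.roots.map fun a => max ‖a‖ t).prod = max 1 t ^ P.natDegree := by
  rw [Multiset.map_congr rfl fun a ha => by rw [h a ha], Multiset.map_const',
    Multiset.prod_replicate, splits_iff_card_roots.mp (IsAlgClosed.splits P)]

section TorusKnot

variable {p q : ℕ} {Δ : ℤ[X]}

lemma natDegree_eq_of_mul_X_pow_sub_one_mul (hp : 0 < p) (hq : 0 < q)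
    (h : Δ * ((X ^ p - 1) * (X ^ q - 1)) = (X ^ (p * q) - 1) * (X - 1)) :
    Δ.natDegree = (p - 1) * (q - 1) := by
  have hXp : X ^ p - 1 ≠ (0 : ℤ[X]) := X_pow_sub_one_ne_zero hp
  have hXq : X ^ q - 1 ≠ (0 : ℤ[X]) := X_pow_sub_one_ne_zero hq
  have hXpq : X ^ (p * q) - 1 ≠ (0 : ℤ[X]) := X_pow_sub_one_ne_zero (Nat.mul_pos hp hq)
  have hX : X - 1 ≠ (0 : ℤ[X]) := X_sub_C_ne_zero 1
  have hΔ : Δ ≠ 0 := left_ne_zero_of_mul (h ▸ mul_ne_zero hXpq hX)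
  have hdeg := congrArg natDegree h
  rw [natDegree_mul hΔ (mul_ne_zero hXp hXq), natDegree_mul hXp hXq, natDegree_mul hXpq hX,
    natDegree_X_pow_sub_one, natDegree_X_pow_sub_one, natDegree_X_pow_sub_one,
    ← C_1, natDegree_X_sub_C] at hdeg
  obtain ⟨p, rfl⟩ := Nat.exists_eq_add_of_lt hp
  obtain ⟨q, rfl⟩ := Nat.exists_eq_add_of_lt hq
  simp only [zero_add, add_tsub_cancel_right]
  nlinarith

lemma prod_roots_map_max_norm_eq_of_mul_X_pow_sub_one_mul (hp : 0 < p) (hq : 0 < q)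
    (h : Δ * ((X ^ p - 1) * (X ^ q - 1)) = (X ^ (p * q) - 1) * (X - 1)) (t : ℝ) :
    ((Δ.map (Int.castRingHom ℂ)).roots.map fun a => max ‖a‖ t).prod =
      max 1 t ^ ((p - 1) * (q - 1)) := by
  have hdvd : Δ.map (Int.castRingHom ℂ) ∣ (X ^ (p * q) - 1) * (X - 1) := by
    simpa using Polynomial.map_dvd (Int.castRingHom ℂ) (Dvd.intro _ h)
  rw [prod_roots_map_max_norm_of_forall_norm_eq_one
      fun a ha => norm_eq_one_of_mem_roots_of_dvd (Nat.mul_pos hp hq).ne' hdvd ha,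
    natDegree_map_eq_of_injective (RingHom.injective_int _),
    natDegree_eq_of_mul_X_pow_sub_one_mul hp hq h]

end TorusKnot

/-- The Alexander polynomials `Δ_{3,7}(X) = (X^21 - 1)(X - 1)/((X^3 - 1)(X^7 - 1))` and
`Δ_{4,5}(X) = (X^20 - 1)(X - 1)/((X^4 - 1)(X^5 - 1))` in `ℤ[X]` are distinct polynomials,
but for every real `t > 0` the product over the complex roots `a` of `Δ_{3,7}` (with
multiplicity) of `max |a| t` equals the corresponding product for `Δ_{4,5}`. -/
theorem torus_knots_3_7_and_4_5 (Δ₁ Δ₂ : ℤ[X])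
    (hΔ₁ : Δ₁ * ((X ^ 3 - 1) * (X ^ 7 - 1)) = (X ^ 21 - 1) * (X - 1))
    (hΔ₂ : Δ₂ * ((X ^ 4 - 1) * (X ^ 5 - 1)) = (X ^ 20 - 1) * (X - 1)) :
    Δ₁ ≠ Δ₂ ∧
      ∀ t : ℝ, 0 < t →
        ((Δ₁.map (Int.castRingHom ℂ)).roots.map (fun a => max ‖a‖ t)).prod =
          ((Δ₂.map (Int.castRingHom ℂ)).roots.map (fun b => max ‖b‖ t)).prod := by
  refine ⟨fun hEq => ?_, fun t _ => ?_⟩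
  · have h₁ := congrArg (eval 2) hΔ₁
    have h₂ := congrArg (eval 2) hΔ₂
    rw [hEq] at h₁
    simp only [eval_mul, eval_sub, eval_pow, eval_X, eval_one] at h₁ h₂
    omega
  · rw [prod_roots_map_max_norm_eq_of_mul_X_pow_sub_one_mul (p := 3) (q := 7) (by norm_num)
        (by norm_num) hΔ₁,
      prod_roots_map_max_norm_eq_of_mul_X_pow_sub_one_mul (p := 4) (q := 5) (by norm_num)
        (by norm_num) hΔ₂]
end

section
/- Let P be a nonzero polynomial with complex coefficients and let t > 0 be a real number. Let Q(X) = P(tX) be the polynomial obtained by substituting tX for X. Then the absolute value of the leading coefficient of Q times the product over the complex roots b of Q (with multiplicity) of max(|b|, 1) equals the absolute value of the leading coefficient of P times the product over the complex roots a of P (with multiplicity) of max(|a|, t). -/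
/-!
The roots of `P(tX)` are the roots of `P` divided by `t`, and its leading coefficient is
`lead(P) · t ^ deg P`; distributing one factor `t` to each root turns `max ‖a / t‖ 1` into
`max ‖a‖ t`. Over `ℂ` the number of roots is `deg P`, so the powers of `t` match.
-/

open Polynomial

theorem Polynomial.leadingCoeff_comp_C_mul_X {R : Type*} [Semiring R] [NoZeroDivisors R]
    (p : R[X]) {t : R} (ht : t ≠ 0) :
    (p.comp (C t * X)).leadingCoeff = p.leadingCoeff * t ^ p.natDegree := by
  rw [leadingCoeff_comp (by rw [natDegree_C_mul_X t ht]; exact one_ne_zero), leadingCoeff_C_mul_X]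

theorem Polynomial.map_roots_comp_C_mul_X {R : Type*} [CommRing R] [IsDomain R]
    (p : R[X]) {t : R} (ht : IsUnit t) :
    (p.comp (C t * X)).roots.map (t * ·) = p.roots := by
  simpa using p.map_roots_comp_C_mul_X_add_C t 0 ht

theorem Multiset.prod_map_max_norm_mul {K : Type*} [NormedDivisionRing K] (s : Multiset K)
    (t : K) :
    (s.map fun b => max ‖t * b‖ ‖t‖).prod = ‖t‖ ^ card s * (s.map fun b => max ‖b‖ 1).prod := by
  have h (b : K) : max ‖t * b‖ ‖t‖ = ‖t‖ * max ‖b‖ 1 := by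
    rw [norm_mul, mul_max_of_nonneg _ _ (norm_nonneg t), mul_one]
  simp only [h, prod_map_mul, map_const', prod_replicate]

theorem mahler_measure_scaling_general (P : ℂ[X]) (t : ℝ) (ht : 0 < t)
    (Q : ℂ[X]) (hQ : Q = P.comp (C (t : ℂ) * X)) :
    ‖Q.leadingCoeff‖ * (Q.roots.map (fun b => max ‖b‖ 1)).prod =
      ‖P.leadingCoeff‖ * (P.roots.map (fun a => max ‖a‖ t)).prod := by
  have htC : (t : ℂ) ≠ 0 := by exact_mod_cast ht.ne'
  have hnorm : ‖(t : ℂ)‖ = t := by simp [ht.le]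
  have hroots : P.roots = Q.roots.map ((t : ℂ) * ·) := by
    rw [hQ, map_roots_comp_C_mul_X P htC.isUnit]
  have hcard : Q.roots.card = P.natDegree := by
    rw [← Multiset.card_map ((t : ℂ) * ·), ← hroots,
      (IsAlgClosed.splits P).natDegree_eq_card_roots]
  have hscaled :
      (fun a => max ‖a‖ t) ∘ ((t : ℂ) * ·) = fun b => max ‖(t : ℂ) * b‖ ‖(t : ℂ)‖ := by
    rw [hnorm]; rfl
  rw [hQ, leadingCoeff_comp_C_mul_X P htC, ← hQ, hroots, Multiset.map_map, hscaled,
    Multiset.prod_map_max_norm_mul, hcard, norm_mul, norm_pow, mul_assoc, hnorm]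

/-- Scaling identity for the Mahler measure: if `P` is a nonzero complex polynomial,
`t > 0`, and `Q(X) = P(tX)`, then `|lead(Q)| · ∏_{roots b of Q} max |b| 1` equals
`|lead(P)| · ∏_{roots a of P} max |a| t`. -/
theorem mahler_measure_scaling (P : ℂ[X]) (hP : P ≠ 0) (t : ℝ) (ht : 0 < t)
    (Q : ℂ[X]) (hQ : Q = P.comp (C (t : ℂ) * X)) :
    ‖Q.leadingCoeff‖ * (Q.roots.map (fun b => max ‖b‖ 1)).prod =
      ‖P.leadingCoeff‖ * (P.roots.map (fun a => max ‖a‖ t)).prod :=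
  mahler_measure_scaling_general P t ht Q hQ
end
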